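/- arXiv:1805.05500 — 2 statements merged into one kernel-verified Lean document; each statement's English description precedes it below -/
import Mathlib

section
/- Let (Ω, 𝓕, μ) be a probability space, let A and B be real-valued random variables on Ω that are independent, and suppose that (essSup A = +∞ or essSup B = +∞) and (essInf A = −∞ or essInf B = −∞). Then for every t ∈ ℝ it holds that 0 < μ{A + B ≤ t} < 1. -/
/-!
If `A` is essentially unbounded below, then `μ{A < t - c} > 0` for every `c`; choosing `c` with
`μ{B ≤ c} > 0`, which exists for any real random variable, independence gives
`μ{A + B < t} ≥ μ{A < t - c} · μ{B ≤ c} > 0`. Symmetrically, essential unboundedness above of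
one summand gives `μ{A + B > t} > 0`, i.e. `μ{A + B ≤ t} < 1`.
-/

open MeasureTheory ProbabilityTheory Filter Set

section EssentialBounds

variable {α β : Type*} [MeasurableSpace α] {μ : Measure α}

lemma measure_lt_pos_of_lt_essSup [CompleteLinearOrder β] {f : α → β} {c : β}
    (h : c < essSup f μ) : 0 < μ {x | c < f x} :=
  pos_iff_ne_zero.2 <| frequently_ae_iff.1 <| frequently_lt_of_lt_limsup (by isBoundedDefault) h

lemma measure_lt_pos_of_essInf_lt [CompleteLinearOrder β] {f : α → β} {c : β}
    (h : essInf f μ < c) : 0 < μ {x | f x < c} :=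
  pos_iff_ne_zero.2 <| frequently_ae_iff.1 <| frequently_lt_of_liminf_lt (by isBoundedDefault) h

lemma measure_lt_pos_of_essSup_eq_top {f : α → ℝ} (h : essSup (fun x => (f x : EReal)) μ = ⊤)
    (c : ℝ) : 0 < μ {x | c < f x} := by
  simpa only [EReal.coe_lt_coe_iff] using
    measure_lt_pos_of_lt_essSup (f := fun x => (f x : EReal)) (c := c) (h ▸ EReal.coe_lt_top c)

lemma measure_lt_pos_of_essInf_eq_bot {f : α → ℝ} (h : essInf (fun x => (f x : EReal)) μ = ⊥)
    (c : ℝ) : 0 < μ {x | f x < c} := by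
  simpa only [EReal.coe_lt_coe_iff] using
    measure_lt_pos_of_essInf_lt (f := fun x => (f x : EReal)) (c := c) (h ▸ EReal.bot_lt_coe c)

variable (μ) in
lemma exists_measure_le_pos [NeZero μ] (f : α → ℝ) : ∃ c : ℝ, 0 < μ {x | f x ≤ c} := by
  have hcover : ⋃ n : ℕ, {x | f x ≤ n} = univ :=
    iUnion_eq_univ_iff.2 fun x => exists_nat_ge (f x)
  obtain ⟨n, hn⟩ := exists_measure_pos_of_not_measure_iUnion_null (μ := μ)
    (s := fun n : ℕ => {x | f x ≤ n})
    (by rw [hcover, Ne, Measure.measure_univ_eq_zero]; exact NeZero.ne μ)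
  exact ⟨n, hn⟩

variable (μ) in
lemma exists_measure_ge_pos [NeZero μ] (f : α → ℝ) : ∃ c : ℝ, 0 < μ {x | c ≤ f x} := by
  obtain ⟨c, hc⟩ := exists_measure_le_pos μ (-f)
  exact ⟨-c, by simpa [neg_le] using hc⟩

end EssentialBounds

section IndependentSum

variable {Ω : Type*} [MeasurableSpace Ω] {μ : Measure Ω} [NeZero μ] {A B : Ω → ℝ}

lemma ProbabilityTheory.IndepFun.measure_add_lt_pos (hAB : IndepFun A B μ)
    (hA : essInf (fun ω => (A ω : EReal)) μ = ⊥) (t : ℝ) : 0 < μ {ω | A ω + B ω < t} := by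
  obtain ⟨c, hc⟩ := exists_measure_le_pos μ B
  calc 0 < μ (A ⁻¹' Iio (t - c)) * μ (B ⁻¹' Iic c) :=
        ENNReal.mul_pos (measure_lt_pos_of_essInf_eq_bot hA (t - c)).ne' hc.ne'
    _ = μ (A ⁻¹' Iio (t - c) ∩ B ⁻¹' Iic c) :=
        (hAB.measure_inter_preimage_eq_mul _ _ measurableSet_Iio measurableSet_Iic).symm
    _ ≤ μ {ω | A ω + B ω < t} := measure_mono fun ω ⟨hω₁, hω₂⟩ => by
        simp only [mem_preimage, mem_Iio, mem_Iic, mem_ofPred_eq] at hω₁ hω₂ ⊢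
        linarith

lemma ProbabilityTheory.IndepFun.measure_lt_add_pos (hAB : IndepFun A B μ)
    (hA : essSup (fun ω => (A ω : EReal)) μ = ⊤) (t : ℝ) : 0 < μ {ω | t < A ω + B ω} := by
  obtain ⟨c, hc⟩ := exists_measure_ge_pos μ B
  calc 0 < μ (A ⁻¹' Ioi (t - c)) * μ (B ⁻¹' Ici c) :=
        ENNReal.mul_pos (measure_lt_pos_of_essSup_eq_top hA (t - c)).ne' hc.ne'
    _ = μ (A ⁻¹' Ioi (t - c) ∩ B ⁻¹' Ici c) :=
        (hAB.measure_inter_preimage_eq_mul _ _ measurableSet_Ioi measurableSet_Ici).symm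
    _ ≤ μ {ω | t < A ω + B ω} := measure_mono fun ω ⟨hω₁, hω₂⟩ => by
        simp only [mem_preimage, mem_Ioi, mem_Ici, mem_ofPred_eq] at hω₁ hω₂ ⊢
        linarith

end IndependentSum

/-- Let `A` and `B` be independent real-valued random variables on a probability space such
that (`essSup A = +∞` or `essSup B = +∞`) and (`essInf A = -∞` or `essInf B = -∞`), where the
essential supremum/infimum are taken in the extended reals. Then for every real `t` one has
`0 < μ{A + B ≤ t} < 1`. -/
theorem cdf_sum_strictly_between_of_unbounded {Ω : Type*} [MeasurableSpace Ω]
    (μ : Measure Ω) [IsProbabilityMeasure μ]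
    (A B : Ω → ℝ) (hA : Measurable A) (hB : Measurable B)
    (hindep : IndepFun A B μ)
    (hsup : essSup (fun ω => ((A ω : ℝ) : EReal)) μ = ⊤ ∨
            essSup (fun ω => ((B ω : ℝ) : EReal)) μ = ⊤)
    (hinf : essInf (fun ω => ((A ω : ℝ) : EReal)) μ = ⊥ ∨
            essInf (fun ω => ((B ω : ℝ) : EReal)) μ = ⊥) :
    ∀ t : ℝ, 0 < μ {ω | A ω + B ω ≤ t} ∧ μ {ω | A ω + B ω ≤ t} < 1 := by
  intro t
  have lower : 0 < μ {ω | A ω + B ω < t} := by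
    rcases hinf with h | h
    · exact hindep.measure_add_lt_pos h t
    · simpa only [add_comm] using hindep.symm.measure_add_lt_pos h t
  have upper : 0 < μ {ω | t < A ω + B ω} := by
    rcases hsup with h | h
    · exact hindep.measure_lt_add_pos h t
    · simpa only [add_comm] using hindep.symm.measure_lt_add_pos h t
  refine ⟨lower.trans_le (measure_mono (ofPred_subset_ofPred.2 fun _ => le_of_lt)), ?_⟩
  simpa [compl_ofPred] using
    prob_compl_lt_one_sub_of_lt_prob upper (measurableSet_lt measurable_const (hA.add hB))
end

section
/- Let N ≥ 1 and let ν₀ and ν₁ be probability measures on {0,1}^N, with cylinder probabilities P_w(x^n) and thresholds τ_{n+1}(x^n) = log(P_0(x^n)/P_1(x^n)) as above. Suppose there exist functions F_0, F_1 : ℝ → [0,1] such that for every 1 ≤ m ≤ N and every prefix x^{m−1} with P_0(x^{m−1}) > 0 and P_1(x^{m−1}) > 0 one has P_w(x^{m−1}⌢0)/P_w(x^{m−1}) = F_w(τ_m(x^{m−1})) for w ∈ {0,1}. Fix 1 ≤ n ≤ N and a prefix x_c of length n−1 with P_0(x_c) > 0 and P_1(x_c) > 0, and suppose F_0(τ_n(x_c))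 = F_1(τ_n(x_c)) ∈ {0,1} (a local information cascade at agent n). Then there is a unique sequence a_n, a_{n+1}, …, a_N ∈ {0,1} such that for every n ≤ m ≤ N, writing y^m = x_c⌢(a_n, …, a_m): (i) P_w(y^m)/P_w(x_c) = 1 for w ∈ {0,1}, i.e. conditioned on the history x_c all subsequent decisions are almost surely equal to a_n, …, a_m under both measures; (ii) τ_{m+1}(y^m) = τ_n(x_c); and (iii) F_0(τ_{m+1}(y^m)) = F_1(τ_{m+1}(y^m)) ∈ {0,1}, i.e. every agent m > n also falls into a local information cascade. -/
/-!
The threshold `τ` depends on a history only through its two cylinder probabilities. Hence a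
history carrying the same probabilities as `x_c` under both `ν₀` and `ν₁` has the same threshold,
so it is again in a local cascade with the same forced decision `c` (`c = 0` if `F(τ) = 1`,
`c = 1` if `F(τ) = 0`), and the branch `c` carries all of its mass. Along the constant
continuation `c` the probabilities, and with them `τ`, therefore never change. Conversely, a
continuation satisfying (i) has the probabilities of `x_c` at every stage, and leaving `c` at
some stage would enter a null branch.
-/

open MeasureTheory

/-- Cylinder probability of a prefix `x` of length `n` under a measure `ν` on `{0,1}^N`. -/
noncomputable def cylProb {N : ℕ} (ν : Measure (Fin N → Fin 2)) {n : ℕ} (h : n ≤ N)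
    (x : Fin n → Fin 2) : ℝ :=
  (ν {y | ∀ i : Fin n, y (Fin.castLE h i) = x i}).toReal

/-- The social decision threshold `τ_{n+1}(x^n) = log(P₀(x^n)/P₁(x^n))` determined by the
cylinder probabilities of the prefix `x^n` under `ν₀` and `ν₁`. -/
noncomputable def socialThreshold {N : ℕ} (ν₀ ν₁ : Measure (Fin N → Fin 2)) {n : ℕ}
    (h : n ≤ N) (x : Fin n → Fin 2) : ℝ :=
  Real.log (cylProb ν₀ h x / cylProb ν₁ h x)

theorem Fin.append_eq_snoc_append_init {α : Type*} {m j : ℕ} (u : Fin m → α)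
    (v : Fin (j + 1) → α) :
    Fin.append u v = Fin.snoc (Fin.append u (Fin.init v)) (v (Fin.last j)) := by
  conv_lhs => rw [← Fin.snoc_init_self v]
  exact Fin.append_snoc u (Fin.init v) (v (Fin.last j))

section Cylinder

variable {N : ℕ}

def prefixCylinder {n : ℕ} (h : n ≤ N) (x : Fin n → Fin 2) : Set (Fin N → Fin 2) :=
  {y | ∀ i, y (Fin.castLE h i) = x i}

theorem cylProb_eq_toReal_prefixCylinder (ν : Measure (Fin N → Fin 2)) {n : ℕ} (h : n ≤ N)
    (x : Fin n → Fin 2) : cylProb ν h x = (ν (prefixCylinder h x)).toReal := rfl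

theorem measurableSet_prefixCylinder {n : ℕ} (h : n ≤ N) (x : Fin n → Fin 2) :
    MeasurableSet (prefixCylinder h x) := by
  simp only [prefixCylinder, Set.ofPred_forall]
  exact .iInter fun i => measurableSet_eq_fun (measurable_pi_apply _) measurable_const

theorem prefixCylinder_snoc {k : ℕ} (hk : k + 1 ≤ N) (p : Fin k → Fin 2) (b : Fin 2) :
    prefixCylinder hk (Fin.snoc p b) =
      prefixCylinder (Nat.le_of_succ_le hk) p ∩ {y | y ⟨k, hk⟩ = b} := by
  ext y
  simp only [prefixCylinder, Set.mem_ofPred_eq, Set.mem_inter_iff, Fin.forall_fin_succ',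
    Fin.snoc_castSucc, Fin.snoc_last]
  rfl

theorem cylProb_snoc_zero_add_snoc_one (ν : Measure (Fin N → Fin 2)) [IsFiniteMeasure ν]
    {k : ℕ} (hk : k + 1 ≤ N) (p : Fin k → Fin 2) :
    cylProb ν hk (Fin.snoc p 0) + cylProb ν hk (Fin.snoc p 1) =
      cylProb ν (Nat.le_of_succ_le hk) p := by
  have hunion : prefixCylinder hk (Fin.snoc p 0) ∪ prefixCylinder hk (Fin.snoc p 1) =
      prefixCylinder (Nat.le_of_succ_le hk) p := by
    ext y
    simp only [prefixCylinder_snoc, Set.mem_union, Set.mem_inter_iff, Set.mem_ofPred_eq]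
    have := Fin.exists_fin_two.mp ⟨y ⟨k, hk⟩, rfl⟩
    tauto
  have hdisj : Disjoint (prefixCylinder hk (Fin.snoc p 0)) (prefixCylinder hk (Fin.snoc p 1)) := by
    rw [prefixCylinder_snoc, prefixCylinder_snoc]
    exact Disjoint.inter_left' _ (Disjoint.inter_right' _ (Set.disjoint_left.mpr fun y h0 h1 =>
      absurd (h0.symm.trans h1) (by decide)))
  rw [cylProb_eq_toReal_prefixCylinder, cylProb_eq_toReal_prefixCylinder,
    cylProb_eq_toReal_prefixCylinder, ← hunion,
    measure_union hdisj (measurableSet_prefixCylinder _ _),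
    ENNReal.toReal_add (measure_ne_top _ _) (measure_ne_top _ _)]

theorem cylProb_append_fin_zero (ν : Measure (Fin N → Fin 2)) {m : ℕ} (h : m + 0 ≤ N)
    (x : Fin m → Fin 2) (v : Fin 0 → Fin 2) : cylProb ν h (Fin.append x v) = cylProb ν h x := by
  rw [Fin.append_right_nil x v rfl]
  rfl

theorem cylProb_snoc_eq_zero_of_ne (ν : Measure (Fin N → Fin 2)) [IsFiniteMeasure ν]
    {k : ℕ} (hk : k + 1 ≤ N) (p : Fin k → Fin 2) {b b' : Fin 2}
    (hb : cylProb ν hk (Fin.snoc p b) = cylProb ν (Nat.le_of_succ_le hk) p) (hne : b' ≠ b) :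
    cylProb ν hk (Fin.snoc p b') = 0 := by
  have hsplit := cylProb_snoc_zero_add_snoc_one ν hk p
  have hnonneg : 0 ≤ cylProb ν hk (Fin.snoc p b') := ENNReal.toReal_nonneg
  fin_cases b <;> fin_cases b' <;> simp_all

end Cylinder

/-- The decision forced on an agent whose probability of choosing `0` is `v ∈ {0, 1}`. -/
noncomputable def cascadeDecision (v : ℝ) : Fin 2 := if v = 1 then 0 else 1

theorem cylProb_snoc_cascadeDecision {N : ℕ} (ν : Measure (Fin N → Fin 2)) [IsFiniteMeasure ν]
    {k : ℕ} (hk : k + 1 ≤ N) (p : Fin k → Fin 2) {v : ℝ} (hv : v = 0 ∨ v = 1)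
    (hp : 0 < cylProb ν (Nat.le_of_succ_le hk) p)
    (hratio : cylProb ν hk (Fin.snoc p 0) / cylProb ν (Nat.le_of_succ_le hk) p = v) :
    cylProb ν hk (Fin.snoc p (cascadeDecision v)) = cylProb ν (Nat.le_of_succ_le hk) p := by
  rcases hv with rfl | rfl
  · have hzero : cylProb ν hk (Fin.snoc p 0) = 0 := by simpa [hp.ne'] using hratio
    rw [cascadeDecision, if_neg zero_ne_one]
    linarith [cylProb_snoc_zero_add_snoc_one ν hk p]
  · rw [cascadeDecision, if_pos rfl]
    exact (div_eq_one_iff_eq hp.ne').mp hratio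

section Cascade

variable {N : ℕ} {ν₀ ν₁ : Measure (Fin N → Fin 2)} {F : Fin 2 → ℝ → ℝ}

/-- The conclusion of Lemma 1 of the paper. -/
def IsDecisionCDF (ν₀ ν₁ : Measure (Fin N → Fin 2)) (F : Fin 2 → ℝ → ℝ) : Prop :=
  ∀ (k : ℕ) (hk : k + 1 ≤ N) (p : Fin k → Fin 2),
    0 < cylProb ν₀ (Nat.le_of_succ_le hk) p →
    0 < cylProb ν₁ (Nat.le_of_succ_le hk) p →
    cylProb ν₀ hk (Fin.snoc p 0) / cylProb ν₀ (Nat.le_of_succ_le hk) p =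
        F 0 (socialThreshold ν₀ ν₁ (Nat.le_of_succ_le hk) p) ∧
      cylProb ν₁ hk (Fin.snoc p 0) / cylProb ν₁ (Nat.le_of_succ_le hk) p =
        F 1 (socialThreshold ν₀ ν₁ (Nat.le_of_succ_le hk) p)

def IsLocalCascade (ν₀ ν₁ : Measure (Fin N → Fin 2)) (F : Fin 2 → ℝ → ℝ) {n : ℕ} (h : n ≤ N)
    (x : Fin n → Fin 2) : Prop :=
  F 0 (socialThreshold ν₀ ν₁ h x) = F 1 (socialThreshold ν₀ ν₁ h x) ∧
    (F 0 (socialThreshold ν₀ ν₁ h x) = 0 ∨ F 0 (socialThreshold ν₀ ν₁ h x) = 1)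

theorem socialThreshold_congr {n n' : ℕ} {h : n ≤ N} {h' : n' ≤ N} {x : Fin n → Fin 2}
    {y : Fin n' → Fin 2} (e0 : cylProb ν₀ h' y = cylProb ν₀ h x)
    (e1 : cylProb ν₁ h' y = cylProb ν₁ h x) :
    socialThreshold ν₀ ν₁ h' y = socialThreshold ν₀ ν₁ h x := by
  rw [socialThreshold, socialThreshold, e0, e1]

theorem IsLocalCascade.congr {n n' : ℕ} {h : n ≤ N} {h' : n' ≤ N} {x : Fin n → Fin 2}
    {y : Fin n' → Fin 2} (hx : IsLocalCascade ν₀ ν₁ F h x)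
    (e0 : cylProb ν₀ h' y = cylProb ν₀ h x) (e1 : cylProb ν₁ h' y = cylProb ν₁ h x) :
    IsLocalCascade ν₀ ν₁ F h' y := by
  rwa [IsLocalCascade, socialThreshold_congr e0 e1]

variable [IsFiniteMeasure ν₀] [IsFiniteMeasure ν₁] {m : ℕ} {hm : m ≤ N} {x : Fin m → Fin 2}

theorem IsLocalCascade.cylProb_snoc_of_cylProb_eq (hF : IsDecisionCDF ν₀ ν₁ F)
    (hx : IsLocalCascade ν₀ ν₁ F hm x) (hx0 : 0 < cylProb ν₀ hm x) (hx1 : 0 < cylProb ν₁ hm x)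
    {k : ℕ} (hk : k + 1 ≤ N) (q : Fin k → Fin 2)
    (e0 : cylProb ν₀ (Nat.le_of_succ_le hk) q = cylProb ν₀ hm x)
    (e1 : cylProb ν₁ (Nat.le_of_succ_le hk) q = cylProb ν₁ hm x) :
    cylProb ν₀ hk (Fin.snoc q (cascadeDecision (F 0 (socialThreshold ν₀ ν₁ hm x)))) =
        cylProb ν₀ hm x ∧
      cylProb ν₁ hk (Fin.snoc q (cascadeDecision (F 0 (socialThreshold ν₀ ν₁ hm x)))) =
        cylProb ν₁ hm x := by
  rw [← e0] at hx0 ⊢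
  rw [← e1] at hx1 ⊢
  obtain ⟨r0, r1⟩ := hF k hk q hx0 hx1
  rw [socialThreshold_congr e0 e1] at r0 r1
  rw [← hx.1] at r1
  exact ⟨cylProb_snoc_cascadeDecision ν₀ hk q hx.2 hx0 r0,
    cylProb_snoc_cascadeDecision ν₁ hk q hx.2 hx1 r1⟩

theorem IsLocalCascade.cylProb_append_const (hF : IsDecisionCDF ν₀ ν₁ F)
    (hx : IsLocalCascade ν₀ ν₁ F hm x) (hx0 : 0 < cylProb ν₀ hm x) (hx1 : 0 < cylProb ν₁ hm x) :
    ∀ (j : ℕ) (hj : m + j ≤ N),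
      cylProb ν₀ hj (Fin.append x fun _ : Fin j =>
          cascadeDecision (F 0 (socialThreshold ν₀ ν₁ hm x))) = cylProb ν₀ hm x ∧
        cylProb ν₁ hj (Fin.append x fun _ : Fin j =>
          cascadeDecision (F 0 (socialThreshold ν₀ ν₁ hm x))) = cylProb ν₁ hm x
  | 0, hj => ⟨cylProb_append_fin_zero ν₀ hj x _, cylProb_append_fin_zero ν₁ hj x _⟩
  | j + 1, hj => by
    obtain ⟨e0, e1⟩ := hx.cylProb_append_const hF hx0 hx1 j (by omega)
    rw [Fin.append_eq_snoc_append_init]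
    exact hx.cylProb_snoc_of_cylProb_eq hF hx0 hx1 hj _ e0 e1

theorem IsLocalCascade.eq_const_of_cylProb_append (hF : IsDecisionCDF ν₀ ν₁ F)
    (hx : IsLocalCascade ν₀ ν₁ F hm x) (hx0 : 0 < cylProb ν₀ hm x) (hx1 : 0 < cylProb ν₁ hm x)
    (a : Fin (N - m) → Fin 2)
    (ha : ∀ (j : ℕ), 1 ≤ j → ∀ (hj : j ≤ N - m),
      cylProb ν₀ (show m + j ≤ N by omega) (Fin.append x fun i : Fin j => a (Fin.castLE hj i)) =
          cylProb ν₀ hm x ∧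
        cylProb ν₁ (show m + j ≤ N by omega)
            (Fin.append x fun i : Fin j => a (Fin.castLE hj i)) = cylProb ν₁ hm x) :
    a = fun _ => cascadeDecision (F 0 (socialThreshold ν₀ ν₁ hm x)) := by
  have hprefix : ∀ (j : ℕ) (hj : j ≤ N - m),
      cylProb ν₀ (show m + j ≤ N by omega) (Fin.append x fun i : Fin j => a (Fin.castLE hj i)) =
          cylProb ν₀ hm x ∧
        cylProb ν₁ (show m + j ≤ N by omega)
            (Fin.append x fun i : Fin j => a (Fin.castLE hj i)) = cylProb ν₁ hm x := by
    rintro (_ | j) hj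
    · exact ⟨cylProb_append_fin_zero ν₀ _ x _, cylProb_append_fin_zero ν₁ _ x _⟩
    · exact ha (j + 1) (by omega) hj
  funext i
  have hi : m + i + 1 ≤ N := by omega
  obtain ⟨e0, e1⟩ := hprefix i i.isLt.le
  obtain ⟨s0, -⟩ := hx.cylProb_snoc_of_cylProb_eq hF hx0 hx1 hi _ e0 e1
  have hnext := (hprefix (i + 1) i.isLt).1
  rw [Fin.append_eq_snoc_append_init] at hnext
  by_contra hne
  exact hx0.ne' (hnext.symm.trans (cylProb_snoc_eq_zero_of_ne ν₀ hi _ (s0.trans e0.symm) hne))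

end Cascade

/-- Proposition 1 of the paper: each local information cascade triggers a global information
cascade. Suppose that, for every prefix of positive probability under both measures, the
conditional probability of the next decision being `0` is `F_w` evaluated at the social
threshold (`F_w` being the conditional CDF of the combined private signal, with values in
`[0,1]`), and suppose agent `n = m + 1` falls into a local information cascade after history
`x_c` of length `m`, i.e. `F₀(τ(x_c)) = F₁(τ(x_c)) ∈ {0,1}`. Then there is a unique sequence
of subsequent decisions `a` such that, for every later stage: (i) conditioned on `x_c`, all
subsequent decisions are almost surely the corresponding entries of `a` under both measures;
(ii) the social threshold stays equal to `τ(x_c)`; and (iii) every later agent also falls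
into a local information cascade. -/
theorem local_cascade_triggers_global_cascade {N : ℕ}
    (ν₀ ν₁ : Measure (Fin N → Fin 2))
    [IsProbabilityMeasure ν₀] [IsProbabilityMeasure ν₁]
    (F : Fin 2 → ℝ → ℝ)
    (hF : ∀ (k : ℕ) (hk : k + 1 ≤ N) (p : Fin k → Fin 2),
      0 < cylProb ν₀ (Nat.le_of_succ_le hk) p →
      0 < cylProb ν₁ (Nat.le_of_succ_le hk) p →
      cylProb ν₀ hk (Fin.snoc p 0) / cylProb ν₀ (Nat.le_of_succ_le hk) p =
          F 0 (socialThreshold ν₀ ν₁ (Nat.le_of_succ_le hk) p) ∧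
        cylProb ν₁ hk (Fin.snoc p 0) / cylProb ν₁ (Nat.le_of_succ_le hk) p =
          F 1 (socialThreshold ν₀ ν₁ (Nat.le_of_succ_le hk) p))
    {m : ℕ} (hmN : m + 1 ≤ N) (xc : Fin m → Fin 2)
    (h0 : 0 < cylProb ν₀ (Nat.le_of_succ_le hmN) xc)
    (h1 : 0 < cylProb ν₁ (Nat.le_of_succ_le hmN) xc)
    (hcascade : F 0 (socialThreshold ν₀ ν₁ (Nat.le_of_succ_le hmN) xc) =
        F 1 (socialThreshold ν₀ ν₁ (Nat.le_of_succ_le hmN) xc) ∧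
      (F 0 (socialThreshold ν₀ ν₁ (Nat.le_of_succ_le hmN) xc) = 0 ∨
        F 0 (socialThreshold ν₀ ν₁ (Nat.le_of_succ_le hmN) xc) = 1)) :
    ∃! a : Fin (N - m) → Fin 2, ∀ (j : ℕ) (hj1 : 1 ≤ j) (hj : j ≤ N - m),
      (cylProb ν₀ (show m + j ≤ N by omega)
            (Fin.append xc (fun i : Fin j => a (Fin.castLE hj i))) /
          cylProb ν₀ (Nat.le_of_succ_le hmN) xc = 1 ∧
        cylProb ν₁ (show m + j ≤ N by omega)
            (Fin.append xc (fun i : Fin j => a (Fin.castLE hj i))) /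
          cylProb ν₁ (Nat.le_of_succ_le hmN) xc = 1) ∧
      socialThreshold ν₀ ν₁ (show m + j ≤ N by omega)
          (Fin.append xc (fun i : Fin j => a (Fin.castLE hj i))) =
        socialThreshold ν₀ ν₁ (Nat.le_of_succ_le hmN) xc ∧
      (F 0 (socialThreshold ν₀ ν₁ (show m + j ≤ N by omega)
            (Fin.append xc (fun i : Fin j => a (Fin.castLE hj i)))) =
          F 1 (socialThreshold ν₀ ν₁ (show m + j ≤ N by omega)
            (Fin.append xc (fun i : Fin j => a (Fin.castLE hj i)))) ∧
        (F 0 (socialThreshold ν₀ ν₁ (show m + j ≤ N by omega)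
            (Fin.append xc (fun i : Fin j => a (Fin.castLE hj i)))) = 0 ∨
          F 0 (socialThreshold ν₀ ν₁ (show m + j ≤ N by omega)
            (Fin.append xc (fun i : Fin j => a (Fin.castLE hj i)))) = 1)) := by
  replace hF : IsDecisionCDF ν₀ ν₁ F := hF
  replace hcascade : IsLocalCascade ν₀ ν₁ F (Nat.le_of_succ_le hmN) xc := hcascade
  set c := cascadeDecision (F 0 (socialThreshold ν₀ ν₁ (Nat.le_of_succ_le hmN) xc))
  refine ⟨fun _ => c, fun j _ hj => ?_, fun a ha => ?_⟩
  · obtain ⟨e0, e1⟩ := hcascade.cylProb_append_const hF h0 h1 j (by omega)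
    exact ⟨⟨by rw [e0, div_self h0.ne'], by rw [e1, div_self h1.ne']⟩,
      socialThreshold_congr e0 e1, hcascade.congr e0 e1⟩
  · refine hcascade.eq_const_of_cylProb_append hF h0 h1 a fun j hj1 hj => ?_
    obtain ⟨⟨r0, r1⟩, -⟩ := ha j hj1 hj
    exact ⟨(div_eq_one_iff_eq h0.ne').mp r0, (div_eq_one_iff_eq h1.ne').mp r1⟩
end
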